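/- If N = E(x_n) for some summable sequence (x_n) of positive reals, where N = [0,1] \ ⋃_{n∈ℕ} U_{2n} is the Guthrie–Nymann Cantorval built on the ternary Cantor set (U_n denoting the union of the 2^{n−1} open middle thirds removed at step n of the Cantor construction), then 2/9 = x_k for some k. -/
import Mathlib


def achievementSet (x : ℕ → ℝ) : Set ℝ :=
  {y | ∃ ε : ℕ → Bool, y = ∑' n, if ε n then x n else 0}

/-- The nested sets of the ternary Cantor construction on `[0,1]`:
`cantorIter n` is what remains after `n` steps. -/
def cantorIter : ℕ → Set ℝ
  | 0 => Set.Icc 0 1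
  | n + 1 => (fun x => x / 3) '' cantorIter n ∪ (fun x => x / 3 + 2 / 3) '' cantorIter n

/-- `U n` is the union of the `2^(n-1)` open middle thirds removed at the `n`-th step
(`n ≥ 1`, i.e. `U (n+1) = removedAtStep (n+1)`). -/
def removedAtStep (n : ℕ) : Set ℝ := cantorIter n \ cantorIter (n + 1)

/-- The Guthrie–Nymann Cantorval `N = [0,1] \ ⋃_{n ≥ 1} U_{2n}`. -/
def GNCantorval : Set ℝ :=
  Set.Icc 0 1 \ ⋃ n : ℕ, removedAtStep (2 * n + 1)

lemma cantorIter_subset_Icc : ∀ n, cantorIter n ⊆ Set.Icc 0 1 := by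
  intro n
  induction n with
  | zero => exact subset_rfl
  | succ n ih =>
    rintro t (⟨s, hs, rfl⟩ | ⟨s, hs, rfl⟩) <;>
      obtain ⟨h0, h1⟩ := ih hs <;> constructor <;> simp only <;> linarith

lemma cantorIter_succ_subset : ∀ n, cantorIter (n + 1) ⊆ cantorIter n := by
  intro n
  induction n with
  | zero => exact cantorIter_subset_Icc 1
  | succ n ih =>
    rintro t (⟨s, hs, rfl⟩ | ⟨s, hs, rfl⟩)
    · exact Or.inl ⟨s, ih hs, rfl⟩
    · exact Or.inr ⟨s, ih hs, rfl⟩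

lemma cantorIter_mono {m n : ℕ} (h : m ≤ n) : cantorIter n ⊆ cantorIter m := by
  induction h with
  | refl => exact subset_rfl
  | step h ih => exact fun t ht => ih (cantorIter_succ_subset _ ht)

lemma zero_mem_cantorIter : ∀ n, (0 : ℝ) ∈ cantorIter n := by
  intro n
  induction n with
  | zero => exact ⟨le_refl 0, zero_le_one⟩
  | succ n ih => exact Or.inl ⟨0, ih, by norm_num⟩

lemma twoThirds_mem_cantorIter : ∀ n, (2 / 3 : ℝ) ∈ cantorIter n := by
  intro n
  cases n with
  | zero => constructor <;> norm_num
  | succ n => exact Or.inr ⟨0, zero_mem_cantorIter n, by norm_num⟩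

lemma twoNinths_mem_cantorIter : ∀ n, (2 / 9 : ℝ) ∈ cantorIter n := by
  intro n
  cases n with
  | zero => constructor <;> norm_num
  | succ n => exact Or.inl ⟨2 / 3, twoThirds_mem_cantorIter n, by norm_num⟩

lemma twoNinths_mem_GN : (2 / 9 : ℝ) ∈ GNCantorval := by
  constructor
  · constructor <;> norm_num
  · intro h
    simp only [Set.mem_iUnion] at h
    obtain ⟨n, hn, hn'⟩ := h
    exact hn' (twoNinths_mem_cantorIter _)

lemma notMem_cantorIter_two {t : ℝ} (h1 : 1 / 9 < t) (h2 : t < 2 / 9) :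
    t ∉ cantorIter 2 := by
  rintro ((⟨s, (⟨u, ⟨hu0, hu1⟩, rfl⟩ | ⟨u, ⟨hu0, hu1⟩, rfl⟩), rfl⟩) |
          (⟨s, hs, rfl⟩)) <;>
    [skip; skip; obtain ⟨h0, _⟩ := cantorIter_subset_Icc 1 hs] <;>
    simp only at * <;> linarith

lemma gap_notMem_GN {t : ℝ} (h1 : 1 / 9 < t) (h2 : t < 2 / 9) :
    t ∉ GNCantorval := by
  intro ht
  apply ht.2
  simp only [Set.mem_iUnion]
  refine ⟨0, ⟨?_, notMem_cantorIter_two h1 h2⟩⟩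
  exact Or.inl ⟨3 * t, ⟨by linarith, by linarith⟩, by simp only; ring⟩

lemma notMem_cantorIter_three {t : ℝ} (h1 : 1 / 27 < t) (h2 : t < 2 / 27) :
    t ∉ cantorIter 3 := by
  have hb : ∀ s ∈ cantorIter 2, (0 : ℝ) ≤ s ∧ s ≤ 1 := fun s hs => cantorIter_subset_Icc 2 hs
  rintro (⟨s, hs, rfl⟩ | ⟨s, hs, rfl⟩)
  · rcases hs with (⟨u, (⟨v, ⟨hv0, hv1⟩, rfl⟩ | ⟨v, ⟨hv0, hv1⟩, rfl⟩), rfl⟩ |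
        ⟨u, hu, rfl⟩) <;> [skip; skip; obtain ⟨h0, _⟩ := cantorIter_subset_Icc 1 hu] <;>
      simp only at * <;> linarith
  · obtain ⟨h0, _⟩ := cantorIter_subset_Icc 2 hs
    simp only at * ; linarith

lemma oneEighteenth_mem_GN : (1 / 18 : ℝ) ∈ GNCantorval := by
  constructor
  · constructor <;> norm_num
  · intro h
    simp only [Set.mem_iUnion] at h
    obtain ⟨n, hn, hn'⟩ := h
    cases n with
    | zero =>
      apply hn'
      exact Or.inl ⟨1 / 6, Or.inl ⟨1 / 2, ⟨by norm_num, by norm_num⟩, by norm_num⟩, by norm_num⟩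
    | succ m =>
      have h3 : (3 : ℕ) ≤ 2 * (m + 1) + 1 := by omega
      exact notMem_cantorIter_three (by norm_num) (by norm_num) (cantorIter_mono h3 hn)

section Achievement

lemma summable_ind {x : ℕ → ℝ} (hpos : ∀ n, 0 < x n) (hsum : Summable x) (ε : ℕ → Bool) :
    Summable (fun n => if ε n then x n else 0) := by
  apply Summable.of_nonneg_of_le (fun n => ?_) (fun n => ?_) hsum
  · split <;> [exact (hpos n).le; exact le_refl 0]
  · split <;> [exact le_refl _; exact (hpos n).le]

lemma tsum_nonneg_ind {x : ℕ → ℝ} (hpos : ∀ n, 0 < x n) (ε : ℕ → Bool) : 0 ≤ ∑' n, if ε n then x n else 0 :=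
  tsum_nonneg fun n => by split <;> [exact (hpos n).le; exact le_refl 0]

lemma term_le {x : ℕ → ℝ} (hpos : ∀ n, 0 < x n) (hsum : Summable x) (ε : ℕ → Bool) (k : ℕ) (hk : ε k = true) :
    x k ≤ ∑' n, if ε n then x n else 0 := by
  have := Summable.le_tsum (summable_ind hpos hsum ε) k
    (fun i _ => by split <;> [exact (hpos i).le; exact le_refl 0])
  simpa [hk] using this

lemma mem_sub {x : ℕ → ℝ} (hpos : ∀ n, 0 < x n) (hsum : Summable x) (ε : ℕ → Bool) (k : ℕ) (hk : ε k = true) :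
    (∑' n, if ε n then x n else 0) - x k ∈ achievementSet x := by
  refine ⟨Function.update ε k false, ?_⟩
  have h1 : (∑' n, if ε n then x n else 0) =
      x k + ∑' n, if (Function.update ε k false) n then x n else 0 := by
    rw [Summable.tsum_eq_add_tsum_ite (summable_ind hpos hsum ε) k]
    congr 1
    · simp [hk]
    · apply tsum_congr
      intro n
      rcases eq_or_ne n k with rfl | hn
      · simp
      · simp [hn, Function.update_of_ne hn]
  linarith

lemma mem_add {x : ℕ → ℝ} (hpos : ∀ n, 0 < x n) (hsum : Summable x) (ε : ℕ → Bool) (k : ℕ) (hk : ε k = false) :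
    (∑' n, if ε n then x n else 0) + x k ∈ achievementSet x := by
  refine ⟨Function.update ε k true, ?_⟩
  have h1 : (∑' n, if (Function.update ε k true) n then x n else 0) =
      x k + ∑' n, if ε n then x n else 0 := by
    rw [Summable.tsum_eq_add_tsum_ite (summable_ind hpos hsum (Function.update ε k true)) k]
    congr 1
    · simp
    · apply tsum_congr
      intro n
      rcases eq_or_ne n k with rfl | hn
      · simp [hk]
      · simp [hn, Function.update_of_ne hn]
  linarith

end Achievement

set_option maxHeartbeats 1000000 in
theorem stmt_13 (x : ℕ → ℝ) (hpos : ∀ n, 0 < x n) (hsum : Summable x)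
    (hN : GNCantorval = achievementSet x) :
    ∃ k : ℕ, x k = 2 / 9 := by
  -- 2/9 ∈ achievement set
  have h29 : (2 / 9 : ℝ) ∈ achievementSet x := by
    rw [← hN]; exact twoNinths_mem_GN
  obtain ⟨ε, hε⟩ := h29
  -- every selected index has x k ≥ 1/9
  have key : ∀ k, ε k = true → 1 / 9 ≤ x k := by
    intro k hk
    by_contra hlt
    push_neg at hlt
    have hmem := mem_sub hpos hsum ε k hk
    rw [← hε] at hmem
    rw [← hN] at hmem
    have hxk := hpos k
    exact gap_notMem_GN (by linarith) (by linarith) hmem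
  -- there is a selected index
  have hne : ∃ k, ε k = true := by
    by_contra h
    push_neg at h
    have : ∀ k, ε k = false := fun k => by
      cases hk : ε k
      · rfl
      · exact absurd hk (h k)
    have hz : ∀ n : ℕ, (if ε n then x n else 0) = 0 := fun n => by simp [this n]
    rw [tsum_congr hz, tsum_zero] at hε
    norm_num at hε
  obtain ⟨k, hk⟩ := hne
  by_cases huniq : ∀ j, ε j = true → j = k
  · -- only one selected index: x k = 2/9
    refine ⟨k, ?_⟩
    have h1 : (∑' n, if ε n then x n else 0) =
        (if ε k then x k else 0) := by
      apply tsum_eq_single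
      intro j hj
      cases hj' : ε j
      · simp
      · exact absurd (huniq j hj') hj
    rw [h1, if_pos hk] at hε
    linarith
  · -- two selected indices: both equal 1/9, contradiction via 1/6 ∈ E
    exfalso
    push_neg at huniq
    obtain ⟨j, hj, hjk⟩ := huniq
    -- remove k then j
    have h1 : (∑' n, if ε n then x n else 0) - x k ∈ achievementSet x :=
      mem_sub hpos hsum ε k hk
    set ε' := Function.update ε k false with hε'def
    obtain ⟨ε₁, hε₁⟩ := h1
    -- instead: use mem_sub structure directly
    have hε'j : (Function.update ε k false) j = true := by
      rw [Function.update_of_ne hjk]; exact hj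
    have h2sum : (∑' n, if (Function.update ε k false) n then x n else 0) =
        (∑' n, if ε n then x n else 0) - x k := by
      have h1' : (∑' n, if ε n then x n else 0) =
          x k + ∑' n, if (Function.update ε k false) n then x n else 0 := by
        rw [Summable.tsum_eq_add_tsum_ite (summable_ind hpos hsum ε) k]
        congr 1
        · simp [hk]
        · apply tsum_congr
          intro n
          rcases eq_or_ne n k with rfl | hn
          · simp
          · simp [hn, Function.update_of_ne hn]
      linarith
    have h2 := mem_sub hpos hsum (Function.update ε k false) j hε'j
    rw [h2sum, ← hε] at h2
    obtain ⟨ε₂, hε₂⟩ := h2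
    have hnn : (0 : ℝ) ≤ 2 / 9 - x k - x j := by
      rw [hε₂]; exact tsum_nonneg_ind hpos ε₂
    have hxk := key k hk
    have hxj := key j hj
    have hxj19 : x j = 1 / 9 := by linarith
    -- 1/18 ∈ E
    have h118 : (1 / 18 : ℝ) ∈ achievementSet x := by
      rw [← hN]; exact oneEighteenth_mem_GN
    obtain ⟨δ, hδ⟩ := h118
    have hδj : δ j = false := by
      cases hδj : δ j
      · rfl
      · exfalso
        have := term_le hpos hsum δ j hδj
        rw [← hδ] at this
        rw [hxj19] at this
        linarith
    have h16 := mem_add hpos hsum δ j hδj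
    rw [← hδ, hxj19] at h16
    rw [← hN] at h16
    have : (1 / 18 : ℝ) + 1 / 9 = 1 / 6 := by norm_num
    rw [this] at h16
    exact gap_notMem_GN (by norm_num) (by norm_num) h16
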